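/- For nonzero complex numbers q, b, c, d, e, f, g, h with 0 < |q| < 1 satisfying q⁵ = bcdefgh, and such that all denominator factors below are nonzero and all series converge, there holds: ∑_{k=0}^{∞} (1 - q^{1+2k}) · (b;q)_k(c;q)_k(d;q)_k(e;q)_k(f;q)_k(g;q)_k(h;q)_k / ((q²/b;q)_k(q²/c;q)_k(q²/d;q)_k(q²/e;q)_k(q²/f;q)_k(q²/g;q)_k(q²/h;q)_k) · q^k = ∑_{k∈ℤ} (b;q)_k(c;q)_k(d;q)_k(e;q)_k(f;q)_k(g;q)_k(h;q)_k / ((q²/b;q)_k(q²/c;q)_k(q²/d;q)_k(q²/e;q)_k(q²/f;q)_k(q²/g;q)_k(q²/h;q)_k) · q^k. Equivalently, for every integer k ≥ 0, the index-(-k-1) term of the bilateral series equals minus q^{3k+1} times the product-ratio at index k (times q^k appropriately), under q⁵ = bcdefgh. -/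

import Mathlib

/-!
Write `r_x(k) = (x;q)_k / (q²/x;q)_k`. Shifting `k ↦ -k - 2` turns each factor
`(1 - x q^k) / (1 - (q²/x) q^k)` of `r_x(k + 1) / r_x(k)` into `(x/q)²` times its reciprocal,
and from `r_x(-1) = -q/x` one gets the reflection `r_x(-n-1) = (-q/x)^(2n+1) r_x(n)`.
For an odd number of parameters with `q² ∏ xᵢ = q^N` the prefactors multiply to
`(-q²)^(2n+1)`, so the bilateral term `t_k = q^k ∏ r_{xᵢ}(k)` satisfies
`t_{-n-1} = -q^(2n+1) t_n`. Pairing `n` with `-n-1` folds the bilateral sum onto the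
unilateral one.
-/

open Complex

noncomputable def qPoch (q x : ℂ) (k : ℤ) : ℂ :=
  if 0 ≤ k then ∏ i ∈ Finset.range k.toNat, (1 - x * q ^ i)
  else (∏ j ∈ Finset.range (-k).toNat, (1 - x * q ^ (k + (j : ℤ))))⁻¹

noncomputable def qPochInf (q x : ℂ) : ℂ := ∏' k : ℕ, (1 - x * q ^ k)

section

variable {q x : ℂ}

lemma qPoch_natCast (n : ℕ) :
    qPoch q x n = ∏ i ∈ Finset.range n, (1 - x * q ^ i) := by
  simp [qPoch]

lemma qPoch_add_one_of_nonneg {k : ℤ} (hk : 0 ≤ k) :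
    qPoch q x (k + 1) = qPoch q x k * (1 - x * q ^ k) := by
  lift k to ℕ using hk
  rw [← Nat.cast_add_one, qPoch_natCast, qPoch_natCast, Finset.prod_range_succ, zpow_natCast]

lemma qPoch_neg_natCast (n : ℕ) :
    qPoch q x (-n) = (∏ j ∈ Finset.range n, (1 - x * q ^ (-(n : ℤ) + j)))⁻¹ := by
  rcases n.eq_zero_or_pos with rfl | hn
  · simp [qPoch]
  · simp [qPoch, hn.ne']

lemma qPoch_of_neg {k : ℤ} (hk : k < 0) :
    qPoch q x k = (1 - x * q ^ k)⁻¹ * qPoch q x (k + 1) := by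
  obtain ⟨n, rfl⟩ : ∃ n : ℕ, k = -(n + 1 : ℕ) := ⟨(-k - 1).toNat, by omega⟩
  have hk1 : -((n + 1 : ℕ) : ℤ) + 1 = -n := by push_cast; ring
  rw [hk1, qPoch_neg_natCast, qPoch_neg_natCast, Finset.prod_range_succ', mul_inv, mul_comm]
  congr 2
  · refine Finset.prod_congr rfl fun j _ => ?_
    push_cast
    ring_nf

lemma qPoch_add_one {k : ℤ} (h : 1 - x * q ^ k ≠ 0) :
    qPoch q x (k + 1) = qPoch q x k * (1 - x * q ^ k) := by
  rcases le_or_gt 0 k with hk | hk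
  · exact qPoch_add_one_of_nonneg hk
  · rw [qPoch_of_neg hk, mul_comm, ← mul_assoc, mul_inv_cancel₀ h, one_mul]

lemma one_sub_mul_zpow_ne_zero (h : ∀ k, qPoch q x k ≠ 0) (j : ℤ) : 1 - x * q ^ j ≠ 0 := by
  intro h0
  rcases le_or_gt 0 j with hj | hj
  · exact h (j + 1) (by rw [qPoch_add_one_of_nonneg hj, h0, mul_zero])
  · exact h j (by rw [qPoch_of_neg hj, h0, inv_zero, zero_mul])

-- `x * q ^ j = 1` exactly when `q ^ 2 / x * q ^ (-j - 2) = 1`.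
lemma one_sub_mul_zpow_ne_zero_of_dual (hq : q ≠ 0) (h : ∀ k, qPoch q (q ^ 2 / x) k ≠ 0)
    (j : ℤ) : 1 - x * q ^ j ≠ 0 := by
  intro h0
  have hx : x = (q ^ j)⁻¹ := eq_inv_of_mul_eq_one_left (by linear_combination -h0)
  apply one_sub_mul_zpow_ne_zero h (-j - 2)
  rw [hx, zpow_sub₀ hq, zpow_neg]
  field_simp
  ring

-- No nonvanishing hypothesis is needed: the two denominators vanish together.
lemma one_sub_mul_zpow_div_reflect (hq : q ≠ 0) (hx : x ≠ 0) (k : ℤ) :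
    (1 - x * q ^ (-k - 2)) / (1 - q ^ 2 / x * q ^ (-k - 2)) =
      (x / q) ^ 2 * ((1 - q ^ 2 / x * q ^ k) / (1 - x * q ^ k)) := by
  have hnum : 1 - x * q ^ (-k - 2) = -(x * q ^ (-k - 2)) * (1 - q ^ 2 / x * q ^ k) := by
    rw [zpow_sub₀ hq, zpow_neg]
    field_simp
    ring
  have hden : 1 - q ^ 2 / x * q ^ (-k - 2) = -(q ^ (-k) / x) * (1 - x * q ^ k) := by
    rw [zpow_sub₀ hq, zpow_neg]
    field_simp
    ring
  rw [hnum, hden, mul_div_mul_comm, neg_div_neg_eq, zpow_sub₀ hq, zpow_neg]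
  field_simp

noncomputable def wellPoisedRatio (q x : ℂ) (k : ℤ) : ℂ :=
  qPoch q x k / qPoch q (q ^ 2 / x) k

lemma wellPoisedRatio_add_one {k : ℤ} (hx : 1 - x * q ^ k ≠ 0)
    (hx' : 1 - q ^ 2 / x * q ^ k ≠ 0) :
    wellPoisedRatio q x (k + 1) =
      wellPoisedRatio q x k * ((1 - x * q ^ k) / (1 - q ^ 2 / x * q ^ k)) := by
  rw [wellPoisedRatio, wellPoisedRatio, qPoch_add_one hx, qPoch_add_one hx', mul_div_mul_comm]

lemma wellPoisedRatio_neg_add_one (hq : q ≠ 0) (hx : x ≠ 0)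
    (hden : ∀ k, qPoch q (q ^ 2 / x) k ≠ 0) (n : ℕ) :
    wellPoisedRatio q x (-(n + 1)) = (-(q / x)) ^ (2 * n + 1) * wellPoisedRatio q x n := by
  have hA := one_sub_mul_zpow_ne_zero_of_dual hq hden
  have hB := one_sub_mul_zpow_ne_zero hden
  have hstep (k : ℤ) : wellPoisedRatio q x k =
      wellPoisedRatio q x (k + 1) / ((1 - x * q ^ k) / (1 - q ^ 2 / x * q ^ k)) :=
    eq_div_of_mul_eq (div_ne_zero (hA k) (hB k)) (wellPoisedRatio_add_one (hA k) (hB k)).symm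
  induction n with
  | zero =>
    have hA1 := hA (-1)
    rw [zpow_neg_one] at hA1
    rw [Nat.cast_zero, zero_add, hstep, neg_add_cancel, zpow_neg_one]
    simp only [wellPoisedRatio, qPoch, le_refl, if_true, Int.toNat_zero, Finset.range_zero,
      Finset.prod_empty, div_one]
    rw [one_div_div, div_eq_iff hA1, show q ^ 2 / x * q⁻¹ = q / x by field_simp, mul_zero,
      zero_add, pow_one, mul_one]
    field_simp
    ring
  | succ n ih =>
    have hk : -((n + 1 : ℕ) + 1 : ℤ) = -(n : ℤ) - 2 := by push_cast; ring
    calc wellPoisedRatio q x (-((n + 1 : ℕ) + 1))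
        = wellPoisedRatio q x (-(n + 1)) /
            ((1 - x * q ^ (-(n : ℤ) - 2)) / (1 - q ^ 2 / x * q ^ (-(n : ℤ) - 2))) := by
          rw [hk, hstep, show -(n : ℤ) - 2 + 1 = -(n + 1) by ring]
      _ = (-(q / x)) ^ (2 * n + 1) * (q / x) ^ 2 *
            (wellPoisedRatio q x n * ((1 - x * q ^ (n : ℤ)) / (1 - q ^ 2 / x * q ^ (n : ℤ)))) := by
          rw [ih, one_sub_mul_zpow_div_reflect hq hx]
          field_simp [hA n, hB n]
      _ = (-(q / x)) ^ (2 * (n + 1) + 1) * wellPoisedRatio q x (n + 1 : ℕ) := by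
          rw [Nat.cast_add_one, wellPoisedRatio_add_one (hA n) (hB n)]
          ring

lemma prod_wellPoisedRatio_mul_zpow_neg_add_one {ι : Type*} {s : Finset ι} {a : ι → ℂ}
    (hq : q ≠ 0) (ha : ∀ i ∈ s, a i ≠ 0) (hden : ∀ i ∈ s, ∀ k, qPoch q (q ^ 2 / a i) k ≠ 0)
    (hodd : Odd s.card) (hbal : q ^ 2 * ∏ i ∈ s, a i = q ^ s.card) (n : ℕ) :
    (∏ i ∈ s, wellPoisedRatio q (a i) (-(n + 1))) * q ^ (-((n : ℤ) + 1)) =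
      -(q ^ (1 + 2 * n) * ((∏ i ∈ s, wellPoisedRatio q (a i) n) * q ^ (n : ℤ))) := by
  have hprod : ∏ i ∈ s, -(q / a i) = -q ^ 2 := by
    have hP : ∏ i ∈ s, a i ≠ 0 := Finset.prod_ne_zero_iff.mpr ha
    rw [Finset.prod_neg, hodd.neg_one_pow, Finset.prod_div_distrib, Finset.prod_const,
      ← hbal, mul_div_assoc, div_self hP]
    ring
  rw [Finset.prod_congr rfl fun i hi => wellPoisedRatio_neg_add_one hq (ha i hi) (hden i hi) n,
    Finset.prod_mul_distrib, Finset.prod_pow, hprod, (odd_two_mul_add_one n).neg_pow, zpow_neg,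
    zpow_natCast, ← Nat.cast_add_one, zpow_natCast]
  field_simp
  ring

end

theorem tsum_one_sub_mul_eq_tsum_int {R : Type*} [Ring R] [TopologicalSpace R]
    [IsTopologicalRing R] [T2Space R] {f : ℤ → R} {w : ℕ → R} (hf : Summable f)
    (hw : ∀ n : ℕ, f (-(n + 1)) = -(w n * f n)) :
    ∑' n : ℕ, (1 - w n) * f n = ∑' k : ℤ, f k := by
  rw [← tsum_nat_add_neg_add_one hf]
  congr 1 with n
  rw [hw, sub_mul, one_mul, sub_eq_add_neg]

theorem unilateral_eq_bilateral_7psi7_second_general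
    (q b c d e f g h : ℂ) (hq0 : q ≠ 0)
    (hb : b ≠ 0) (hc : c ≠ 0) (hd : d ≠ 0) (he : e ≠ 0) (hf : f ≠ 0)
    (hg : g ≠ 0) (hh : h ≠ 0)
    (hbal : q ^ 5 = b * c * d * e * f * g * h)
    (hden : ∀ k : ℤ, qPoch q (q ^ 2 / b) k ≠ 0 ∧ qPoch q (q ^ 2 / c) k ≠ 0 ∧
      qPoch q (q ^ 2 / d) k ≠ 0 ∧ qPoch q (q ^ 2 / e) k ≠ 0 ∧
      qPoch q (q ^ 2 / f) k ≠ 0 ∧ qPoch q (q ^ 2 / g) k ≠ 0 ∧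
      qPoch q (q ^ 2 / h) k ≠ 0)
    (hsum2 : Summable fun k : ℤ =>
      qPoch q b k * qPoch q c k * qPoch q d k * qPoch q e k * qPoch q f k *
        qPoch q g k * qPoch q h k /
      (qPoch q (q ^ 2 / b) k * qPoch q (q ^ 2 / c) k * qPoch q (q ^ 2 / d) k *
        qPoch q (q ^ 2 / e) k * qPoch q (q ^ 2 / f) k * qPoch q (q ^ 2 / g) k *
        qPoch q (q ^ 2 / h) k) * q ^ k) :
    (∑' k : ℕ, (1 - q ^ (1 + 2 * k)) *
      (qPoch q b (k : ℤ) * qPoch q c (k : ℤ) * qPoch q d (k : ℤ) *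
        qPoch q e (k : ℤ) * qPoch q f (k : ℤ) * qPoch q g (k : ℤ) *
        qPoch q h (k : ℤ)) /
      (qPoch q (q ^ 2 / b) (k : ℤ) * qPoch q (q ^ 2 / c) (k : ℤ) *
        qPoch q (q ^ 2 / d) (k : ℤ) * qPoch q (q ^ 2 / e) (k : ℤ) *
        qPoch q (q ^ 2 / f) (k : ℤ) * qPoch q (q ^ 2 / g) (k : ℤ) *
        qPoch q (q ^ 2 / h) (k : ℤ)) * q ^ k) =
    ∑' k : ℤ,
      qPoch q b k * qPoch q c k * qPoch q d k * qPoch q e k * qPoch q f k *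
        qPoch q g k * qPoch q h k /
      (qPoch q (q ^ 2 / b) k * qPoch q (q ^ 2 / c) k * qPoch q (q ^ 2 / d) k *
        qPoch q (q ^ 2 / e) k * qPoch q (q ^ 2 / f) k * qPoch q (q ^ 2 / g) k *
        qPoch q (q ^ 2 / h) k) * q ^ k := by
  set a : Fin 7 → ℂ := ![b, c, d, e, f, g, h]
  have hterm : (fun k : ℤ =>
      qPoch q b k * qPoch q c k * qPoch q d k * qPoch q e k * qPoch q f k *
        qPoch q g k * qPoch q h k /
      (qPoch q (q ^ 2 / b) k * qPoch q (q ^ 2 / c) k * qPoch q (q ^ 2 / d) k *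
        qPoch q (q ^ 2 / e) k * qPoch q (q ^ 2 / f) k * qPoch q (q ^ 2 / g) k *
        qPoch q (q ^ 2 / h) k) * q ^ k) =
      fun k => (∏ i, wellPoisedRatio q (a i) k) * q ^ k := by
    funext k
    simp only [Fin.prod_univ_seven, wellPoisedRatio, a, Matrix.cons_val]
    ring
  rw [hterm] at hsum2 ⊢
  have ha : ∀ i ∈ Finset.univ, a i ≠ 0 := fun i _ => by fin_cases i <;> simpa [a]
  have hden' : ∀ i ∈ Finset.univ, ∀ k, qPoch q (q ^ 2 / a i) k ≠ 0 := fun i _ k => by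
    obtain ⟨h₁, h₂, h₃, h₄, h₅, h₆, h₇⟩ := hden k
    fin_cases i <;> simpa [a]
  have hbal' : q ^ 2 * ∏ i, a i = q ^ (Finset.univ : Finset (Fin 7)).card := by
    simp only [Fin.prod_univ_seven, a, Matrix.cons_val, Finset.card_univ, Fintype.card_fin]
    linear_combination -q ^ 2 * hbal
  rw [← tsum_one_sub_mul_eq_tsum_int hsum2
    (prod_wellPoisedRatio_mul_zpow_neg_add_one hq0 ha hden' (by decide) hbal')]
  refine tsum_congr fun k => ?_
  simp only [Fin.prod_univ_seven, wellPoisedRatio, a, Matrix.cons_val, zpow_natCast]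
  ring

theorem unilateral_eq_bilateral_7psi7_second
    (q b c d e f g h : ℂ) (hq0 : q ≠ 0) (hq : ‖q‖ < 1)
    (hb : b ≠ 0) (hc : c ≠ 0) (hd : d ≠ 0) (he : e ≠ 0) (hf : f ≠ 0)
    (hg : g ≠ 0) (hh : h ≠ 0)
    (hbal : q ^ 5 = b * c * d * e * f * g * h)
    (hden : ∀ k : ℤ, qPoch q (q ^ 2 / b) k ≠ 0 ∧ qPoch q (q ^ 2 / c) k ≠ 0 ∧
      qPoch q (q ^ 2 / d) k ≠ 0 ∧ qPoch q (q ^ 2 / e) k ≠ 0 ∧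
      qPoch q (q ^ 2 / f) k ≠ 0 ∧ qPoch q (q ^ 2 / g) k ≠ 0 ∧
      qPoch q (q ^ 2 / h) k ≠ 0)
    (hsum1 : Summable fun k : ℕ => (1 - q ^ (1 + 2 * k)) *
      (qPoch q b (k : ℤ) * qPoch q c (k : ℤ) * qPoch q d (k : ℤ) *
        qPoch q e (k : ℤ) * qPoch q f (k : ℤ) * qPoch q g (k : ℤ) *
        qPoch q h (k : ℤ)) /
      (qPoch q (q ^ 2 / b) (k : ℤ) * qPoch q (q ^ 2 / c) (k : ℤ) *
        qPoch q (q ^ 2 / d) (k : ℤ) * qPoch q (q ^ 2 / e) (k : ℤ) *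
        qPoch q (q ^ 2 / f) (k : ℤ) * qPoch q (q ^ 2 / g) (k : ℤ) *
        qPoch q (q ^ 2 / h) (k : ℤ)) * q ^ k)
    (hsum2 : Summable fun k : ℤ =>
      qPoch q b k * qPoch q c k * qPoch q d k * qPoch q e k * qPoch q f k *
        qPoch q g k * qPoch q h k /
      (qPoch q (q ^ 2 / b) k * qPoch q (q ^ 2 / c) k * qPoch q (q ^ 2 / d) k *
        qPoch q (q ^ 2 / e) k * qPoch q (q ^ 2 / f) k * qPoch q (q ^ 2 / g) k *
        qPoch q (q ^ 2 / h) k) * q ^ k) :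
    (∑' k : ℕ, (1 - q ^ (1 + 2 * k)) *
      (qPoch q b (k : ℤ) * qPoch q c (k : ℤ) * qPoch q d (k : ℤ) *
        qPoch q e (k : ℤ) * qPoch q f (k : ℤ) * qPoch q g (k : ℤ) *
        qPoch q h (k : ℤ)) /
      (qPoch q (q ^ 2 / b) (k : ℤ) * qPoch q (q ^ 2 / c) (k : ℤ) *
        qPoch q (q ^ 2 / d) (k : ℤ) * qPoch q (q ^ 2 / e) (k : ℤ) *
        qPoch q (q ^ 2 / f) (k : ℤ) * qPoch q (q ^ 2 / g) (k : ℤ) *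
        qPoch q (q ^ 2 / h) (k : ℤ)) * q ^ k) =
    ∑' k : ℤ,
      qPoch q b k * qPoch q c k * qPoch q d k * qPoch q e k * qPoch q f k *
        qPoch q g k * qPoch q h k /
      (qPoch q (q ^ 2 / b) k * qPoch q (q ^ 2 / c) k * qPoch q (q ^ 2 / d) k *
        qPoch q (q ^ 2 / e) k * qPoch q (q ^ 2 / f) k * qPoch q (q ^ 2 / g) k *
        qPoch q (q ^ 2 / h) k) * q ^ k :=
  unilateral_eq_bilateral_7psi7_second_general q b c d e f g h hq0 hb hc hd he hf hg hh hbal hden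
    hsum2
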